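/- The functors ΣD and DΣ on FI-modules are naturally isomorphic: for every FI-module V, Σ(DV) ≅ D(ΣV), naturally in V. -/

import Mathlib

open CategoryTheory CategoryTheory.Limits

def FI : Type := ℕ
def FI.of : ℕ → FI := id
def FI.n : FI → ℕ := id
instance : Category FI where
  Hom m n := Fin m.n ↪ Fin n.n
  id _ := Function.Embedding.refl _
  comp f g := f.trans g
  id_comp _ := rfl
  comp_id _ := rfl
  assoc _ _ _ := rfl
abbrev FIMod (k : Type) [CommRing k] := FI ⥤ ModuleCat.{0} k

/-- Extension of an injection `[m] → [n]` to `[m+1] → [n+1]` fixing the new first point. -/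
def extEmb {m n : ℕ} (f : Fin m ↪ Fin n) : Fin (m + 1) ↪ Fin (n + 1) :=
  ⟨fun x => Fin.cases 0 (fun r => (f r).succ) x, by
    intro a b h
    induction a using Fin.cases with
    | zero =>
      induction b using Fin.cases with
      | zero => rfl
      | succ j => simp at h; exact absurd h.symm (Fin.succ_ne_zero _)
    | succ i =>
      induction b using Fin.cases with
      | zero => simp at h
      | succ j =>
        simp only [Fin.cases_succ] at h
        exact congrArg Fin.succ (f.injective (Fin.succ_injective _ h))⟩

@[simp] lemma extEmb_zero {m n : ℕ} (f : Fin m ↪ Fin n) : extEmb f 0 = 0 := rfl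
@[simp] lemma extEmb_succ {m n : ℕ} (f : Fin m ↪ Fin n) (r : Fin m) :
    extEmb f r.succ = (f r).succ := rfl

/-- Extensionality for morphisms in `FI`. -/
lemma FI.hom_ext {m n : FI} {f g : Fin m.n ↪ Fin n.n} (h : ∀ x, f x = g x) :
    f = g := DFunLike.ext f g h

/-- The self-embedding `ι : FI → FI`, `[n] ↦ [n+1]`. -/
def iota : FI ⥤ FI where
  obj n := FI.of (n.n + 1)
  map f := extEmb f
  map_id n := by
    refine FI.hom_ext fun x => ?_
    induction x using Fin.cases <;> rfl
  map_comp {a b c} f g := by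
    refine FI.hom_ext fun x => ?_
    induction x using Fin.cases with
    | zero => rfl
    | succ i =>
      show extEmb (f.trans g) i.succ = extEmb g (extEmb f i.succ)
      simp

variable (k : Type) [CommRing k]

/-- The shift functor `Σ` on `FI`-modules. -/
def shiftF : FIMod k ⥤ FIMod k := (Functor.whiskeringLeft FI FI (ModuleCat k)).obj iota

/-- The natural transformation `Id → ι` given by the inclusions `[n] ↪ [n+1]`, `r ↦ r+1`. -/
def piTrans : 𝟭 FI ⟶ iota where
  app n := ⟨Fin.succ, Fin.succ_injective _⟩
  naturality m n f := by
    refine FI.hom_ext fun x => ?_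
    simp [iota, extEmb, CategoryStruct.comp, CategoryStruct.id]
    rfl

/-- The natural map `V → ΣV`. -/
def toShift (V : FIMod k) : V ⟶ (shiftF k).obj V :=
  V.leftUnitor.inv ≫ Functor.whiskerRight piTrans V

/-- `V → ΣV` as a natural transformation of endofunctors. -/
def natToShift : 𝟭 (FIMod k) ⟶ shiftF k where
  app V := toShift k V
  naturality V W φ := by
    ext n
    simp only [Functor.id_obj, Functor.id_map, toShift, shiftF, Functor.whiskeringLeft_obj_obj,
      Functor.comp_obj, Category.assoc, NatTrans.comp_app, Functor.leftUnitor_inv_app,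
      Functor.whiskerRight_app, Functor.whiskeringLeft_obj_map, Functor.whiskerLeft_app,
      Category.id_comp]
    exact LinearMap.congr_fun (congrArg ModuleCat.Hom.hom (φ.naturality (piTrans.app n)).symm) _

/-- The derivative `DV`, the cokernel of `V → ΣV`. -/
noncomputable def Dobj (V : FIMod k) : FIMod k := cokernel (toShift k V)

/-- The derivative functor `D`. -/
noncomputable def Dfun : FIMod k ⥤ FIMod k where
  obj V := Dobj k V
  map {V W} φ := cokernel.map _ _ φ ((shiftF k).map φ) ((natToShift k).naturality φ).symm
  map_id V := by
    apply coequalizer.hom_ext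
    simp [Dobj]
  map_comp {U V W} φ ψ := by
    apply coequalizer.hom_ext
    simp [Dobj]

variable (k : Type) [CommRing k]

/-- An `FI`-submodule of an `FI`-module. -/
structure FISub {k : Type} [CommRing k] (V : FIMod k) where
  sub : ∀ n : FI, Submodule k (V.obj n)
  map_mem : ∀ {m n : FI} (f : m ⟶ n) (v : V.obj m), v ∈ sub m → (V.map f) v ∈ sub n

/-- `V` is generated in degrees `≤ N`. -/
def GeneratedIn {k : Type} [CommRing k] (V : FIMod k) (N : ℕ) : Prop :=
  ∀ W : FISub V, (∀ i : ℕ, i ≤ N → ∀ v : V.obj (FI.of i), v ∈ W.sub (FI.of i)) →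
    ∀ (n : FI) (v : V.obj n), v ∈ W.sub n

/-- `V` is a finitely generated `FI`-module. -/
def FG {k : Type} [CommRing k] (V : FIMod k) : Prop :=
  ∃ S : Finset ((n : ℕ) × V.obj (FI.of n)),
    ∀ W : FISub V, (∀ s ∈ S, s.2 ∈ W.sub (FI.of s.1)) → ∀ (n : FI) (v : V.obj n), v ∈ W.sub n

/-- `V` is torsionless: no nonzero element is killed by an injection. -/
def Torsionless {k : Type} [CommRing k] (V : FIMod k) : Prop :=
  ∀ (i : ℕ) (v : V.obj (FI.of i)), v ≠ 0 →
    ∀ α : FI.of i ⟶ FI.of (i + 1), (V.map α) v ≠ 0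


instance (k : Type) [CommRing k] : HasFiniteBiproducts (FIMod k) :=
  Abelian.hasFiniteBiproducts

variable (k : Type) [CommRing k]

/-- The free (representable) `FI`-module `M(i)`, the linearization of `FI(i,−)`. -/
noncomputable def Mrep (i : ℕ) : FIMod k where
  obj n := ModuleCat.of k ((Fin i ↪ Fin n.n) →₀ k)
  map {m n} f := ModuleCat.ofHom (Finsupp.lmapDomain k k fun (e : Fin i ↪ Fin m.n) => e.trans f)
  map_id n := by
    have : (fun e : Fin i ↪ Fin n.n => e.trans (𝟙 n)) = id := by
      funext e; ext x; rfl
    show ModuleCat.ofHom (Finsupp.lmapDomain k k _) = _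
    rw [this, Finsupp.lmapDomain_id]
    rfl
  map_comp {a b c} f g := by
    show ModuleCat.ofHom (Finsupp.lmapDomain k k _) = _
    have : (fun e : Fin i ↪ Fin a.n => e.trans (f ≫ g))
        = (fun e : Fin i ↪ Fin b.n => e.trans g) ∘ (fun e => e.trans f) := by
      funext e; ext x; rfl
    rw [this, Finsupp.lmapDomain_comp]
    rfl

lemma FI.le_of_hom {m n : FI} (f : m ⟶ n) : m.n ≤ n.n := by
  simpa using Fintype.card_le_of_embedding (f : Fin m.n ↪ Fin n.n)

/-- The submodule `(JV)_n ⊆ V_n` spanned by images from strictly lower degrees. -/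
def Jsub {k : Type} [CommRing k] (V : FIMod k) (n : FI) : Submodule k (V.obj n) :=
  ⨆ (m : FI) (_ : m.n < n.n) (f : m ⟶ n), LinearMap.range (V.map f).hom

lemma Jsub_le_comap {k : Type} [CommRing k] (V : FIMod k) {m n : FI} (f : m ⟶ n) :
    Jsub V m ≤ (Jsub V n).comap (V.map f).hom := by
  refine iSup_le fun m' => iSup_le fun hm' => iSup_le fun g => ?_
  rintro x ⟨y, rfl⟩
  simp only [Submodule.mem_comap]
  have h1 : (V.map f).hom ((V.map g).hom y) = (V.map (g ≫ f)).hom y := by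
    rw [V.map_comp]; rfl
  rw [h1]
  have h2 : m'.n < n.n := lt_of_lt_of_le hm' (FI.le_of_hom f)
  refine Submodule.mem_iSup_of_mem m' ?_
  refine Submodule.mem_iSup_of_mem h2 ?_
  exact Submodule.mem_iSup_of_mem (g ≫ f) ⟨y, rfl⟩

/-- The degreewise quotient `H₀(V) = V/JV` as an `FI`-module. -/
noncomputable def H0obj {k : Type} [CommRing k] (V : FIMod k) : FIMod k where
  obj n := ModuleCat.of k (V.obj n ⧸ Jsub V n)
  map {m n} f := ModuleCat.ofHom (Submodule.mapQ _ _ (V.map f).hom (Jsub_le_comap V f))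
  map_id n := by
    have h : V.map (𝟙 n) = 𝟙 (V.obj n) := V.map_id n
    apply ModuleCat.hom_ext
    refine Submodule.linearMap_qext _ ?_
    ext x
    show Submodule.Quotient.mk ((V.map (𝟙 n)).hom x) = _
    rw [h]
    rfl
  map_comp {a b c} f g := by
    have h : V.map (f ≫ g) = V.map f ≫ V.map g := V.map_comp f g
    apply ModuleCat.hom_ext
    refine Submodule.linearMap_qext _ ?_
    ext x
    show Submodule.Quotient.mk ((V.map (f ≫ g)).hom x) = _
    rw [h]
    rfl

/-- The functor `H₀ = ℂ̃₀ ⊗_{ℂ̃} − : FI-Mod → FI-Mod`. -/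
noncomputable def H0Functor (k : Type) [CommRing k] : FIMod k ⥤ FIMod k where
  obj := H0obj
  map {V W} φ :=
    { app := fun n => ModuleCat.ofHom (Submodule.mapQ _ _ (φ.app n).hom (by
        refine iSup_le fun m => iSup_le fun hm => iSup_le fun g => ?_
        rintro x ⟨y, rfl⟩
        simp only [Submodule.mem_comap]
        have h1 : (φ.app n).hom ((V.map g).hom y) = (W.map g).hom ((φ.app m).hom y) :=
          LinearMap.congr_fun (congrArg ModuleCat.Hom.hom (φ.naturality g)) y
        rw [h1]
        refine Submodule.mem_iSup_of_mem m (Submodule.mem_iSup_of_mem hm ?_)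
        exact Submodule.mem_iSup_of_mem g ⟨_, rfl⟩)),
      naturality := by
        intro m n f
        apply ModuleCat.hom_ext
        refine Submodule.linearMap_qext _ ?_
        ext x
        have h : (φ.app n).hom ((V.map f).hom x) = (W.map f).hom ((φ.app m).hom x) :=
          LinearMap.congr_fun (congrArg ModuleCat.Hom.hom (φ.naturality f)) x
        show Submodule.Quotient.mk ((φ.app n).hom ((V.map f).hom x)) = _
        rw [h]
        rfl }
  map_id V := by
    ext n : 2
    apply ModuleCat.hom_ext
    refine Submodule.linearMap_qext _ ?_
    ext x
    rfl
  map_comp {U V W} φ ψ := by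
    ext n : 2
    apply ModuleCat.hom_ext
    refine Submodule.linearMap_qext _ ?_
    ext x
    rfl

instance (k : Type) [CommRing k] : (H0Functor k).Additive where
  map_add := by
    intro V W φ ψ
    ext n : 2
    apply ModuleCat.hom_ext
    refine Submodule.linearMap_qext _ ?_
    ext x
    show Submodule.Quotient.mk ((φ.app n).hom x + (ψ.app n).hom x) =
      (((H0Functor k).map φ).app n).hom (Submodule.Quotient.mk x) +
      (((H0Functor k).map ψ).app n).hom (Submodule.Quotient.mk x)
    rw [Submodule.Quotient.mk_add]
    rfl

/-- The homology functor `H_s(−) = Tor_s^{ℂ̃}(ℂ̃₀, −)`, as the `s`-th left derived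
functor of `H₀`. -/
noncomputable def Hs (k : Type) [CommRing k] [EnoughProjectives (FIMod k)] (s : ℕ) :
    FIMod k ⥤ FIMod k :=
  (H0Functor k).leftDerived s

/-- Strictly monotone injections `[i] → [n]`, a set of representatives for the orbits of
the right action of `S_i` on `FI(i,n)`. -/
def OrdInj (i n : ℕ) : Type := {e : Fin i ↪ Fin n // StrictMono e}

noncomputable instance (i n : ℕ) : Fintype (OrdInj i n) := by
  classical
  unfold OrdInj
  infer_instance

/-- The canonical map `⊕_{e ∈ OrdInj(i,n)} V_i → V_n`, `(v_e) ↦ Σ_e e·v_e`.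
It is bijective for every `n` exactly when `V` is the induced module
`ℂ̃ ⊗_{k[S_i]} V_i`. -/
noncomputable def basicMap {k : Type} [CommRing k] (V : FIMod k) (i n : ℕ) :
    (OrdInj i n → V.obj (FI.of i)) →ₗ[k] V.obj (FI.of n) :=
  ∑ e : OrdInj i n, (V.map (e.1 : FI.of i ⟶ FI.of n)).hom.comp (LinearMap.proj e)

/-- `V` is (isomorphic to) a basic `♯`-filtered module `ℂ̃ ⊗_{k[S_i]} T` with `T = V_i`. -/
def BasicSharp {k : Type} [CommRing k] (V : FIMod k) (i : ℕ) : Prop :=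
  (∀ j : ℕ, j < i → Subsingleton (V.obj (FI.of j))) ∧
    ∀ n : ℕ, Function.Bijective (basicMap V i n)

/-- `V` admits a filtration of length `m` whose successive quotients are basic
`♯`-filtered modules. -/
def SharpChain {k : Type} [CommRing k] : ℕ → FIMod k → Prop
  | 0, V => IsZero V
  | m + 1, V => ∃ (U W : FIMod k) (f : U ⟶ V) (g : V ⟶ W) (w : f ≫ g = 0),
      (ShortComplex.mk f g w).ShortExact ∧ SharpChain m U ∧ ∃ i, BasicSharp W i

/-- `V` is a `♯`-filtered `FI`-module. -/
def SharpFiltered {k : Type} [CommRing k] (V : FIMod k) : Prop :=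
  ∃ m, SharpChain m V

/-- `pdLE n M` : `M` has projective dimension `≤ n`. -/
noncomputable def pdLE {C : Type*} [Category C] [Abelian C] : ℕ → C → Prop
  | 0, M => Projective M
  | n + 1, M => ∃ (P : C) (f : P ⟶ M), Projective P ∧ Epi f ∧ pdLE n (kernel f)

/-- The `d`-th iterated shift `Σ_d V`. -/
def shiftIter (k : Type) [CommRing k] : ℕ → FIMod k → FIMod k
  | 0, V => V
  | d + 1, V => (shiftF k).obj (shiftIter k d V)

/-- A permutation of `[i]` as a morphism in `FI`. -/
def permHom (i : ℕ) (g : Equiv.Perm (Fin i)) : FI.of i ⟶ FI.of i := g.toEmbedding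

/-- The representation of the symmetric group `S_i` on `V_i` coming from the
`FI`-module structure. -/
def permRep {k : Type} [CommRing k] (V : FIMod k) (i : ℕ) :
    Representation k (Equiv.Perm (Fin i)) (V.obj (FI.of i)) where
  toFun g := (V.map (permHom i g)).hom
  map_one' := by
    have h1 : permHom i 1 = 𝟙 (FI.of i) := rfl
    show (V.map (permHom i 1)).hom = (1 : Module.End k (V.obj (FI.of i)))
    rw [h1, V.map_id]; rfl
  map_mul' g h := by
    have h1 : permHom i (g * h) = permHom i h ≫ permHom i g := rfl
    show (V.map (permHom i (g * h))).hom = (V.map (permHom i g)).hom * (V.map (permHom i h)).hom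
    rw [h1, V.map_comp]; rfl


/-! Σ is precomposition with ι, so it preserves cokernels and `ΣDV ≅ coker(Σ(V → ΣV))`, while
`DΣV = coker(ΣV → Σ²V)`. In degree `n` these two maps `ΣV → Σ²V` are induced by `ι(π_n)` and
`π_{n+1}`, which differ exactly by the transposition of the first two points of `[n+2]`; that
transposition is natural in `n`, so it gives a natural automorphism of `Σ²` identifying the two
cokernels. -/

section CokernelOfNatTrans

variable {C : Type*} [Category* C] [HasZeroMorphisms C] [HasCokernels C] {F : C ⥤ C}

noncomputable def cokernelOfNatTrans (η : 𝟭 C ⟶ F) : C ⥤ C where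
  obj X := cokernel (η.app X)
  map φ := cokernel.map _ _ φ (F.map φ) (η.naturality φ).symm
  map_id X := coequalizer.hom_ext (by simp)
  map_comp φ ψ := coequalizer.hom_ext (by simp)

noncomputable def cokernelOfNatTrans.commIso [F.PreservesZeroMorphisms]
    [PreservesColimitsOfShape WalkingParallelPair F] (η : 𝟭 C ⟶ F) (τ : F ⋙ F ≅ F ⋙ F)
    (hτ : ∀ X, η.app (F.obj X) ≫ τ.hom.app X = F.map (η.app X)) :
    F ⋙ cokernelOfNatTrans η ≅ cokernelOfNatTrans η ⋙ F :=
  NatIso.ofComponents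
    (fun X => cokernel.mapIso (η.app (F.obj X)) (F.map (η.app X)) (Iso.refl _) (τ.app X)
      (by simp [hτ]) ≪≫ (PreservesCokernel.iso F (η.app X)).symm)
    (fun {X Y} φ => coequalizer.hom_ext (by
      simp only [cokernelOfNatTrans, Functor.id_obj, Functor.comp_obj, coequalizer_as_cokernel,
        Functor.comp_map, Iso.trans_hom, cokernel.mapIso_hom, Iso.refl_hom, Iso.app_hom, Iso.symm_hom,
        PreservesCokernel.iso_inv, cokernel.π_desc_assoc, Category.assoc, π_comp_cokernelComparison,
        cokernelComparison_map_desc, Functor.map_comp, cokernel.π_desc]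
      exact τ.hom.naturality_assoc φ _))

end CokernelOfNatTrans

def swapHom (n : FI) : iota.obj (iota.obj n) ⟶ iota.obj (iota.obj n) :=
  (Equiv.swap (0 : Fin (n.n + 1 + 1)) 1).toEmbedding

lemma swapHom_comp_swapHom (n : FI) : swapHom n ≫ swapHom n = 𝟙 _ :=
  FI.hom_ext fun _ => Equiv.swap_apply_self _ _ _

lemma Fin.swap_zero_one_succ_succ {n : ℕ} (j : Fin n) :
    Equiv.swap (0 : Fin (n + 2)) 1 j.succ.succ = j.succ.succ :=
  Equiv.swap_apply_of_ne_of_ne (Fin.succ_ne_zero _)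
    fun h => Fin.succ_ne_zero j (Fin.succ_injective _ (h : j.succ.succ = (0 : Fin (n + 1)).succ))

lemma swapHom_naturality {m n : FI} (f : m ⟶ n) :
    iota.map (iota.map f) ≫ swapHom n = swapHom m ≫ iota.map (iota.map f) := by
  refine FI.hom_ext fun (x : Fin (m.n + 2)) => ?_
  change Equiv.swap 0 1 (extEmb (extEmb f) x) = extEmb (extEmb f) (Equiv.swap 0 1 x)
  induction x using Fin.cases with
  | zero => rfl
  | succ i =>
    induction i using Fin.cases with
    | zero => rfl
    | succ j => simp only [extEmb_succ, Fin.swap_zero_one_succ_succ]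

lemma iota_map_piTrans_comp_swapHom (n : FI) :
    iota.map (piTrans.app n) ≫ swapHom n = piTrans.app (iota.obj n) := by
  refine FI.hom_ext fun (x : Fin (n.n + 1)) => ?_
  change Equiv.swap 0 1 (extEmb (piTrans.app n) x) = x.succ
  induction x using Fin.cases with
  | zero => rfl
  | succ i => exact Fin.swap_zero_one_succ_succ i

def swapIso : iota ⋙ iota ≅ iota ⋙ iota where
  hom := { app := swapHom, naturality := fun _ _ f => swapHom_naturality f }
  inv := { app := swapHom, naturality := fun _ _ f => swapHom_naturality f }
  hom_inv_id := by ext n : 2; exact swapHom_comp_swapHom n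
  inv_hom_id := by ext n : 2; exact swapHom_comp_swapHom n

def shiftSwapIso : shiftF k ⋙ shiftF k ≅ shiftF k ⋙ shiftF k :=
  (Functor.whiskeringLeft FI FI (ModuleCat k)).mapIso swapIso

lemma natToShift_shift_comp_shiftSwapIso (V : FIMod k) :
    (natToShift k).app ((shiftF k).obj V) ≫ (shiftSwapIso k).hom.app V =
      (shiftF k).map ((natToShift k).app V) := by
  ext n : 2
  change V.map (iota.map (piTrans.app n)) ≫ V.map (swapHom n) = V.map (piTrans.app (iota.obj n))
  rw [← V.map_comp, iota_map_piTrans_comp_swapHom]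

instance : (shiftF k).PreservesZeroMorphisms where

instance : PreservesColimitsOfShape WalkingParallelPair (shiftF k) :=
  whiskeringLeft_preservesColimitsOfShape _ _

/-- The functors `ΣD` and `DΣ` are naturally isomorphic. -/
theorem stmt_9 (k : Type) [CommRing k] :
    Nonempty ((Dfun k ⋙ shiftF k) ≅ (shiftF k ⋙ Dfun k)) :=
  -- `Dfun k` unfolds to `cokernelOfNatTrans (natToShift k)`.
  ⟨(cokernelOfNatTrans.commIso (natToShift k) (shiftSwapIso k)
    (natToShift_shift_comp_shiftSwapIso k)).symm⟩
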